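/- arXiv:2605.24316 — 3 statements merged into one kernel-verified Lean document; each statement's English description precedes it below -/
import Mathlib

section
/- Let Σ_ν be symmetric PSD, γ_t ∈ (0, γ_0] with all eigenvalues of I − γ_t Σ_ν in [0,1], and let η_t be random vectors with E[η_t] = 0, E[η_t η_t^⊤] ⪯ σ_η² Σ_ν, with η_t independent of the past. If ν_t = (I − γ_t Σ_ν) ν_{t−1} + γ_t η_t with ν_0 = 0, then E[ν_t ν_t^⊤] ⪯ σ_η² γ_0 I for every t ≥ 0. -/
/-!
Since `ν_{t-1}` is a measurable function of `η_0, …, η_{t-1}`, it is independent of the centered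
noise `η_t`, so the cross terms vanish and `C_t = E[ν_t ν_tᵀ]` satisfies
`C_t = A C_{t-1} A + γ_t² E[η_t η_tᵀ]` with `A = I - γ_t Σ`. The bound `C ⪯ σ² γ₀ I` is then
preserved at each step: using `γ_t² Σ = γ_t (I - A)` and `γ_t ≤ γ₀`,
`A C A + γ_t² E[η_t η_tᵀ] ⪯ σ² γ₀ (A² + I - A) ⪯ σ² γ₀ I`, because
`A - A² = A (I - A) A + (I - A) A (I - A) ⪰ 0` when `0 ⪯ A ⪯ I`.
-/

open MeasureTheory Matrix ProbabilityTheory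

namespace Matrix

variable {n : Type*} [Fintype n] [DecidableEq n]

theorem PosSemidef.sub_mul_self {A : Matrix n n ℝ} (hA : A.PosSemidef)
    (hA₁ : (1 - A).PosSemidef) : (A - A * A).PosSemidef := by
  have key : A - A * A = A * (1 - A) * Aᴴ + (1 - A) * A * (1 - A)ᴴ := by
    rw [hA.1.eq, hA₁.1.eq]
    noncomm_ring
  rw [key]
  exact (hA₁.mul_mul_conjTranspose_same A).add (hA.mul_mul_conjTranspose_same (1 - A))

theorem posSemidef_smul_one_sub_conj_add_smul {S E C : Matrix n n ℝ} {γ γ₀ σ₂ : ℝ}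
    (hA : (1 - γ • S).PosSemidef) (hS : (γ • S).PosSemidef) (hγ : γ ≤ γ₀) (hγ₀ : 0 ≤ γ₀)
    (hσ : 0 ≤ σ₂) (hE : (σ₂ • S - E).PosSemidef) (hC : ((σ₂ * γ₀) • 1 - C).PosSemidef) :
    ((σ₂ * γ₀) • 1 - ((1 - γ • S) * C * (1 - γ • S) + γ ^ 2 • E)).PosSemidef := by
  set A := 1 - γ • S with hAdef
  have key : (σ₂ * γ₀) • 1 - (A * C * A + γ ^ 2 • E)
      = A * ((σ₂ * γ₀) • 1 - C) * Aᴴ + γ ^ 2 • (σ₂ • S - E)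
        + (σ₂ * γ₀) • (A - A * A) + (σ₂ * (γ₀ - γ)) • (γ • S) := by
    rw [hA.1.eq, hAdef]
    simp only [mul_sub, sub_mul, mul_one, one_mul, smul_mul_assoc, mul_smul_comm, smul_sub,
      smul_smul]
    module
  have hA₁ : (1 - A).PosSemidef := by simpa [hAdef] using hS
  rw [key]
  exact (((hC.mul_mul_conjTranspose_same A).add (hE.smul (sq_nonneg γ))).add
    ((hA.sub_mul_self hA₁).smul (mul_nonneg hσ hγ₀))).add
    (hS.smul (mul_nonneg hσ (sub_nonneg.2 hγ)))

end Matrix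

section SecondMoment

variable {Ω : Type*} [MeasurableSpace Ω] {μ : Measure Ω}

theorem integrable_mul_of_integrable_mul_self {f g : Ω → ℝ}
    (hf : AEStronglyMeasurable f μ) (hg : AEStronglyMeasurable g μ)
    (hf₂ : Integrable (fun ω => f ω * f ω) μ) (hg₂ : Integrable (fun ω => g ω * g ω) μ) :
    Integrable (fun ω => f ω * g ω) μ := by
  simp only [← pow_two] at hf₂ hg₂
  exact ((memLp_two_iff_integrable_sq hf).2 hf₂).integrable_mul
    ((memLp_two_iff_integrable_sq hg).2 hg₂)

theorem integral_mul_eq_zero_of_indepFun {n : Type*} [IsFiniteMeasure μ] {X Y : Ω → n → ℝ}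
    (hXY : IndepFun X Y μ) (hX : Measurable X) (hY : Measurable Y)
    (hY₀ : ∀ j, ∫ ω, Y ω j ∂μ = 0) (i j : n) :
    ∫ ω, X ω i * Y ω j ∂μ = 0 := by
  have h := (hXY.comp (measurable_pi_apply i) (measurable_pi_apply j))
    |>.integral_fun_mul_eq_mul_integral ((measurable_pi_apply i).comp hX).aestronglyMeasurable
      ((measurable_pi_apply j).comp hY).aestronglyMeasurable
  simpa [Function.comp_def, hY₀] using h

variable {n : Type*} [Fintype n]

noncomputable def secondMoment (μ : Measure Ω) (X : Ω → n → ℝ) : Matrix n n ℝ :=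
  Matrix.of fun i j => ∫ ω, X ω i * X ω j ∂μ

theorem secondMoment_mulVec_add_smul (A : Matrix n n ℝ) (c : ℝ) {X Y : Ω → n → ℝ}
    (hX : ∀ i j, Integrable (fun ω => X ω i * X ω j) μ)
    (hY : ∀ i j, Integrable (fun ω => Y ω i * Y ω j) μ)
    (hXY : ∀ i j, Integrable (fun ω => X ω i * Y ω j) μ)
    (hcross : ∀ i j, ∫ ω, X ω i * Y ω j ∂μ = 0) :
    secondMoment μ (fun ω => A *ᵥ X ω + c • Y ω)
      = A * secondMoment μ X * Aᵀ + c ^ 2 • secondMoment μ Y := by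
  ext i j
  have hAA : ∀ x : n → ℝ, (A *ᵥ x) i * (A *ᵥ x) j = ∑ k, ∑ l, A i k * A j l * (x k * x l) := by
    intro x
    simp only [mulVec, dotProduct, Finset.sum_mul_sum]
    exact Finset.sum_congr rfl fun k _ => Finset.sum_congr rfl fun l _ => by ring
  have hAY : ∀ (x y : n → ℝ) (r s : n), (A *ᵥ x) r * y s = ∑ k, A r k * (x k * y s) := by
    intro x y r s
    simp only [mulVec, dotProduct, Finset.sum_mul, mul_assoc]
  have expand : ∀ ω, (A *ᵥ X ω + c • Y ω) i * (A *ᵥ X ω + c • Y ω) j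
      = ∑ k, ∑ l, A i k * A j l * (X ω k * X ω l) + c * ∑ k, A i k * (X ω k * Y ω j)
        + c * ∑ l, A j l * (X ω l * Y ω i) + c ^ 2 * (Y ω i * Y ω j) := by
    intro ω
    rw [← hAA, ← hAY, ← hAY]
    simp only [Pi.add_apply, Pi.smul_apply, smul_eq_mul]
    ring
  have hAXX : Integrable (fun ω => ∑ k, ∑ l, A i k * A j l * (X ω k * X ω l)) μ :=
    integrable_finsetSum _ fun k _ => integrable_finsetSum _ fun l _ => (hX k l).const_mul _
  have hAXY : ∀ r s, Integrable (fun ω => ∑ k, A r k * (X ω k * Y ω s)) μ := fun r s =>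
    integrable_finsetSum _ fun k _ => (hXY k s).const_mul _
  have hmain : ∫ ω, ∑ k, ∑ l, A i k * A j l * (X ω k * X ω l) ∂μ
      = (A * secondMoment μ X * Aᵀ) i j := by
    simp only [mul_apply, transpose_apply, secondMoment, of_apply, Finset.sum_mul]
    rw [integral_finsetSum _ fun k _ => integrable_finsetSum _ fun l _ => (hX k l).const_mul _,
      Finset.sum_comm]
    refine Finset.sum_congr rfl fun k _ => ?_
    rw [integral_finsetSum _ fun l _ => (hX k l).const_mul _]
    refine Finset.sum_congr rfl fun l _ => ?_
    rw [integral_const_mul]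
    ring
  have hAcross : ∀ r s, ∫ ω, ∑ k, A r k * (X ω k * Y ω s) ∂μ = 0 := by
    intro r s
    rw [integral_finsetSum _ fun k _ => (hXY k s).const_mul _]
    simp [integral_const_mul, hcross]
  simp only [secondMoment, of_apply, expand] at hmain ⊢
  rw [integral_add ((hAXX.fun_add ((hAXY i j).const_mul c)).fun_add ((hAXY j i).const_mul c))
      ((hY i j).const_mul _), integral_add (hAXX.fun_add ((hAXY i j).const_mul c))
      ((hAXY j i).const_mul c), integral_add hAXX ((hAXY i j).const_mul c),
    integral_const_mul, integral_const_mul, integral_const_mul, hAcross, hAcross, hmain]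
  simp

theorem secondMoment_mulVec_add_smul_of_indepFun [IsFiniteMeasure μ] (A : Matrix n n ℝ) (c : ℝ)
    {X Y : Ω → n → ℝ} (hXY : IndepFun X Y μ) (hX : Measurable X) (hY : Measurable Y)
    (hY₀ : ∀ j, ∫ ω, Y ω j ∂μ = 0)
    (hX₂ : ∀ i j, Integrable (fun ω => X ω i * X ω j) μ)
    (hY₂ : ∀ i j, Integrable (fun ω => Y ω i * Y ω j) μ) :
    secondMoment μ (fun ω => A *ᵥ X ω + c • Y ω)
      = A * secondMoment μ X * Aᵀ + c ^ 2 • secondMoment μ Y :=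
  secondMoment_mulVec_add_smul A c hX₂ hY₂
    (fun i j => integrable_mul_of_integrable_mul_self
      ((measurable_pi_apply i).comp hX).aestronglyMeasurable
      ((measurable_pi_apply j).comp hY).aestronglyMeasurable (hX₂ i i) (hY₂ j j))
    (integral_mul_eq_zero_of_indepFun hXY hX hY hY₀)

end SecondMoment

theorem exists_measurable_eq_comp_of_recursion {Ω β γ : Type*} [MeasurableSpace β]
    [MeasurableSpace γ] {η : ℕ → Ω → β} {ν : ℕ → Ω → γ} (f : ℕ → γ → β → γ)
    (hf : ∀ t, Measurable (Function.uncurry (f t))) (x₀ : γ) (hν₀ : ∀ ω, ν 0 ω = x₀)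
    (hν : ∀ t ω, ν (t + 1) ω = f t (ν t ω) (η (t + 1) ω)) (t : ℕ) :
    ∃ g : (Fin (t + 1) → β) → γ, Measurable g ∧ ∀ ω, ν t ω = g fun s => η s ω := by
  induction t with
  | zero => exact ⟨fun _ => x₀, measurable_const, hν₀⟩
  | succ t ih =>
    obtain ⟨g, hg, hνg⟩ := ih
    refine ⟨fun x => f t (g fun s => x s.castSucc) (x (Fin.last _)), ?_, fun ω => ?_⟩
    · exact (hf t).comp ((hg.comp (measurable_pi_lambda _ fun s => measurable_pi_apply _)).prodMk
        (measurable_pi_apply _))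
    · simp [hν, hνg]

theorem measurable_and_indepFun_of_recursion {Ω β γ : Type*} [MeasurableSpace Ω]
    [MeasurableSpace β] [MeasurableSpace γ] {μ : Measure Ω} {η : ℕ → Ω → β} {ν : ℕ → Ω → γ}
    (f : ℕ → γ → β → γ) (hf : ∀ t, Measurable (Function.uncurry (f t))) (x₀ : γ)
    (hν₀ : ∀ ω, ν 0 ω = x₀) (hν : ∀ t ω, ν (t + 1) ω = f t (ν t ω) (η (t + 1) ω))
    (hη : ∀ t, Measurable (η t))
    (hindep : ∀ t, IndepFun (η (t + 1)) (fun ω => fun s : Fin (t + 1) => η s.val ω) μ) (t : ℕ) :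
    Measurable (ν t) ∧ IndepFun (ν t) (η (t + 1)) μ := by
  obtain ⟨g, hg, hνg⟩ := exists_measurable_eq_comp_of_recursion f hf x₀ hν₀ hν t
  rw [funext hνg]
  exact ⟨hg.comp (measurable_pi_lambda _ fun s => hη s), ((hindep t).comp measurable_id hg).symm⟩

theorem stmt8_general {Ω : Type*} [MeasurableSpace Ω] (μ : Measure Ω) [IsProbabilityMeasure μ]
    (M : ℕ) (Sig : Matrix (Fin M) (Fin M) ℝ)
    (γ0 : ℝ) (hγ0 : 0 < γ0) (γ : ℕ → ℝ) (hγle : ∀ t, γ t ≤ γ0)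
    (hlow : ∀ t, ((1 : Matrix (Fin M) (Fin M) ℝ) - γ t • Sig).PosSemidef)
    (hup : ∀ t, (γ t • Sig).PosSemidef)
    (ση : ℝ) (η : ℕ → Ω → Fin M → ℝ)
    (hηmeas : ∀ t, Measurable (η t))
    (hηmean : ∀ t i, ∫ ω, η t ω i ∂μ = 0)
    (hηint : ∀ t i j, Integrable (fun ω => η t ω i * η t ω j) μ)
    (hηcov : ∀ t, ((ση ^ 2) • Sig -
        Matrix.of (fun i j => ∫ ω, η t ω i * η t ω j ∂μ)).PosSemidef)
    (hηindep : ∀ t, IndepFun (η (t + 1)) (fun ω => fun s : Fin (t + 1) => η s.val ω) μ)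
    (ν : ℕ → Ω → Fin M → ℝ)
    (hν0 : ∀ ω, ν 0 ω = 0)
    (hνrec : ∀ t ω, ν (t + 1) ω =
      ((1 : Matrix (Fin M) (Fin M) ℝ) - γ (t + 1) • Sig) *ᵥ ν t ω
        + γ (t + 1) • η (t + 1) ω)
    (hνint : ∀ t i j, Integrable (fun ω => ν t ω i * ν t ω j) μ) :
    ∀ t, ((ση ^ 2 * γ0) • (1 : Matrix (Fin M) (Fin M) ℝ) -
        Matrix.of (fun i j => ∫ ω, ν t ω i * ν t ω j ∂μ)).PosSemidef := by
  have hstate : ∀ t, Measurable (ν t) ∧ IndepFun (ν t) (η (t + 1)) μ :=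
    measurable_and_indepFun_of_recursion
      (fun t x e => (1 - γ (t + 1) • Sig) *ᵥ x + γ (t + 1) • e) (fun t => by fun_prop) 0 hν0 hνrec
      hηmeas hηindep
  have hrec : ∀ t, secondMoment μ (ν (t + 1)) = (1 - γ (t + 1) • Sig) * secondMoment μ (ν t)
      * (1 - γ (t + 1) • Sig) + γ (t + 1) ^ 2 • secondMoment μ (η (t + 1)) := fun t => by
    rw [funext (hνrec t), secondMoment_mulVec_add_smul_of_indepFun _ _ (hstate t).2 (hstate t).1
      (hηmeas _) (hηmean _) (hνint t) (hηint _), ← conjTranspose_eq_transpose_of_trivial,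
      (hlow _).1.eq]
  intro t
  induction t with
  | zero =>
    have hC₀ : secondMoment μ (ν 0) = 0 := by ext; simp [secondMoment, hν0]
    change (_ - secondMoment μ (ν 0)).PosSemidef
    rw [hC₀, sub_zero]
    exact PosSemidef.one.smul (mul_nonneg (sq_nonneg ση) hγ0.le)
  | succ t ih =>
    change (_ - secondMoment μ (ν (t + 1))).PosSemidef
    rw [hrec]
    exact posSemidef_smul_one_sub_conj_add_smul (hlow _) (hup _) (hγle _) hγ0.le (sq_nonneg ση)
      (hηcov _) ih

/-- Covariance bound for a semi-stochastic linear recursion: if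
`ν_t = (I − γ_t Σ_ν) ν_{t−1} + γ_t η_t` with `ν_0 = 0`, where the noises `η_t` are
centered, independent of the past, with `E[η_t η_t^⊤] ⪯ σ_η² Σ_ν`, the eigenvalues of
`I − γ_t Σ_ν` lie in `[0,1]`, and `0 < γ_t ≤ γ_0`, then `E[ν_t ν_t^⊤] ⪯ σ_η² γ_0 I`. -/
theorem stmt8 {Ω : Type*} [MeasurableSpace Ω] (μ : Measure Ω) [IsProbabilityMeasure μ]
    (M : ℕ) (Sig : Matrix (Fin M) (Fin M) ℝ) (hSig : Sig.PosSemidef)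
    (γ0 : ℝ) (hγ0 : 0 < γ0) (γ : ℕ → ℝ) (hγpos : ∀ t, 0 < γ t) (hγle : ∀ t, γ t ≤ γ0)
    (hlow : ∀ t, ((1 : Matrix (Fin M) (Fin M) ℝ) - γ t • Sig).PosSemidef)
    (hup : ∀ t, (γ t • Sig).PosSemidef)
    (ση : ℝ) (η : ℕ → Ω → Fin M → ℝ)
    (hηmeas : ∀ t, Measurable (η t))
    (hηmean : ∀ t i, ∫ ω, η t ω i ∂μ = 0)
    (hηint : ∀ t i j, Integrable (fun ω => η t ω i * η t ω j) μ)
    (hηcov : ∀ t, ((ση ^ 2) • Sig -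
        Matrix.of (fun i j => ∫ ω, η t ω i * η t ω j ∂μ)).PosSemidef)
    (hηindep : ∀ t, IndepFun (η (t + 1)) (fun ω => fun s : Fin (t + 1) => η s.val ω) μ)
    (ν : ℕ → Ω → Fin M → ℝ)
    (hν0 : ∀ ω, ν 0 ω = 0)
    (hνrec : ∀ t ω, ν (t + 1) ω =
      ((1 : Matrix (Fin M) (Fin M) ℝ) - γ (t + 1) • Sig) *ᵥ ν t ω
        + γ (t + 1) • η (t + 1) ω)
    (hνint : ∀ t i j, Integrable (fun ω => ν t ω i * ν t ω j) μ) :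
    ∀ t, ((ση ^ 2 * γ0) • (1 : Matrix (Fin M) (Fin M) ℝ) -
        Matrix.of (fun i j => ∫ ω, ν t ω i * ν t ω j ∂μ)).PosSemidef :=
  stmt8_general μ M Sig γ0 hγ0 γ hγle hlow hup ση η hηmeas hηmean hηint hηcov hηindep ν hν0 hνrec
    hνint
end

section
/- Let Σ = S_{0:k}H_{0:k}S_{0:k}^⊤ + A_k where A_k is positive definite. Then with T := H^{1/2}S^⊤Σ^{−1}SH^{1/2} − I written in the 2×2 block form with head block U, off-diagonal V, and tail block W := H_{k:∞}^{1/2}S_{k:∞}^⊤Σ^{−1}S_{k:∞}H_{k:∞}^{1/2} − I, one has the exact identity W² + V^⊤V = −W, and consequently 0 ⪯ W² + V^⊤V ⪯ I. -/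
/-! With `X₀ = S₀ H₀^{1/2}` and `X₁ = S₁ H₁^{1/2}` one has `Σ = X₀ X₀ᵀ + X₁ X₁ᵀ = X Xᵀ` for
`X = [X₀ X₁]`, so `P = Xᵀ Σ⁻¹ X` is idempotent. Its tail diagonal block is `Q = W + 1` and its
off-diagonal block is `V`, so the tail block of `P² = P` reads `Q² + VᵀV = Q`, which rearranges
to `W² + VᵀV = -W`. Since `W` is symmetric, `W² + VᵀV = WᵀW + VᵀV ⪰ 0`, and
`1 - (W² + VᵀV) = Q ⪰ 0` because `Σ⁻¹ ⪰ 0`. -/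

open Matrix

/-- The square root of a positive semidefinite matrix, as `Matrix.PosSemidef.sqrt` was defined
in Mathlib of December 2024 (removed since). -/
noncomputable def Matrix.PosSemidef.sqrt {n 𝕜 : Type*} [Fintype n] [DecidableEq n] [RCLike 𝕜]
    [PartialOrder 𝕜] [StarOrderedRing 𝕜]
    {A : Matrix n n 𝕜} (hA : A.PosSemidef) : Matrix n n 𝕜 :=
  hA.1.eigenvectorUnitary.1 * diagonal ((↑) ∘ Real.sqrt ∘ hA.1.eigenvalues) *
    (star hA.1.eigenvectorUnitary : Matrix n n 𝕜)

namespace Matrix.PosSemidef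

variable {n : Type*} [Fintype n] [DecidableEq n] {A : Matrix n n ℝ}

theorem posSemidef_sqrt (hA : A.PosSemidef) : hA.sqrt.PosSemidef :=
  PosSemidef.mul_mul_conjTranspose_same
    (posSemidef_diagonal_iff.mpr fun _ ↦ by simp [Real.sqrt_nonneg]) _

theorem sqrt_mul_self (hA : A.PosSemidef) : hA.sqrt * hA.sqrt = A := by
  set U : Matrix n n ℝ := (hA.1.eigenvectorUnitary : Matrix n n ℝ)
  set D : Matrix n n ℝ := diagonal (RCLike.ofReal ∘ Real.sqrt ∘ hA.1.eigenvalues)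
  have hU : star U * U = 1 := Unitary.coe_star_mul_self _
  have hD : D * D = diagonal (RCLike.ofReal ∘ hA.1.eigenvalues) := by
    simp [D, diagonal_mul_diagonal, Real.mul_self_sqrt (hA.eigenvalues_nonneg _)]
  conv_rhs => rw [hA.1.spectral_theorem, Unitary.conjStarAlgAut_apply]
  calc hA.sqrt * hA.sqrt = U * (D * (star U * U) * D) * star U := by
        simp only [sqrt, U, D, Matrix.mul_assoc]
    _ = _ := by rw [hU, Matrix.mul_one, hD]

theorem transpose_sqrt (hA : A.PosSemidef) : hA.sqrtᵀ = hA.sqrt :=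
  hA.posSemidef_sqrt.isHermitian.eq

theorem mul_sqrt_mul_transpose {m : Type*} (hA : A.PosSemidef) (S : Matrix m n ℝ) :
    S * hA.sqrt * (S * hA.sqrt)ᵀ = S * A * Sᵀ := by
  rw [transpose_mul, transpose_sqrt, Matrix.mul_assoc, ← Matrix.mul_assoc hA.sqrt,
    sqrt_mul_self, ← Matrix.mul_assoc]

end Matrix.PosSemidef

namespace Matrix

variable {m n₀ n₁ R : Type*} [Fintype m] [DecidableEq m] [Fintype n₀] [Fintype n₁]
  [CommRing R] [StarRing R]

theorem mul_self_add_conjTranspose_mul_self_eq {Sig : Matrix m m R} (X₀ : Matrix m n₀ R)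
    (X₁ : Matrix m n₁ R) (hSig : Sig = X₀ * X₀ᴴ + X₁ * X₁ᴴ) (hdet : IsUnit Sig.det) :
    X₁ᴴ * Sig⁻¹ * X₁ * (X₁ᴴ * Sig⁻¹ * X₁) + (X₀ᴴ * Sig⁻¹ * X₁)ᴴ * (X₀ᴴ * Sig⁻¹ * X₁) =
      X₁ᴴ * Sig⁻¹ * X₁ := by
  have hSig_herm : Sigᴴ = Sig := by
    rw [hSig]
    exact ((isHermitian_mul_conjTranspose_self X₀).add (isHermitian_mul_conjTranspose_self X₁)).eq
  have hinv : Sig⁻¹ᴴ = Sig⁻¹ := by rw [conjTranspose_nonsing_inv, hSig_herm]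
  calc _ = X₁ᴴ * Sig⁻¹ * (X₀ * X₀ᴴ + X₁ * X₁ᴴ) * Sig⁻¹ * X₁ := by
        simp only [conjTranspose_mul, conjTranspose_conjTranspose, hinv, Matrix.mul_add,
          Matrix.add_mul, Matrix.mul_assoc]
        abel
    _ = X₁ᴴ * Sig⁻¹ * X₁ := by rw [← hSig, nonsing_inv_mul_cancel_right _ _ hdet]

end Matrix

/-- Tail-block identity for the approximation error: with
`Σ = S₀H₀S₀^⊤ + A` where `A = S₁H₁S₁^⊤` is positive definite,
`W = H₁^{1/2}S₁^⊤Σ^{−1}S₁H₁^{1/2} − I` and `V = H₀^{1/2}S₀^⊤Σ^{−1}S₁H₁^{1/2}`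
satisfy the exact identity `W² + V^⊤V = −W`, and consequently
`0 ⪯ W² + V^⊤V ⪯ I`. -/
theorem stmt14 (Mdim k₁ k₂ : ℕ)
    (H₀ : Matrix (Fin k₁) (Fin k₁) ℝ) (hH₀ : H₀.PosSemidef)
    (H₁ : Matrix (Fin k₂) (Fin k₂) ℝ) (hH₁ : H₁.PosSemidef)
    (S₀ : Matrix (Fin Mdim) (Fin k₁) ℝ) (S₁ : Matrix (Fin Mdim) (Fin k₂) ℝ)
    (hA : (S₁ * H₁ * S₁ᵀ).PosDef) :
    let Sig := S₀ * H₀ * S₀ᵀ + S₁ * H₁ * S₁ᵀ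
    let W := hH₁.sqrt * S₁ᵀ * Sig⁻¹ * S₁ * hH₁.sqrt - 1
    let V := hH₀.sqrt * S₀ᵀ * Sig⁻¹ * S₁ * hH₁.sqrt
    W * W + Vᵀ * V = -W ∧
      (W * W + Vᵀ * V).PosSemidef ∧
      ((1 : Matrix (Fin k₂) (Fin k₂) ℝ) - (W * W + Vᵀ * V)).PosSemidef := by
  intro Sig W V
  set X₀ := S₀ * hH₀.sqrt
  set X₁ := S₁ * hH₁.sqrt
  have hSig : Sig = X₀ * X₀ᴴ + X₁ * X₁ᴴ := by
    simp only [conjTranspose_eq_transpose_of_trivial, PosSemidef.mul_sqrt_mul_transpose, Sig, X₀,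
      X₁]
  have hSig_pos : Sig.PosDef := PosDef.posSemidef_add (hH₀.mul_mul_conjTranspose_same S₀) hA
  set Q := X₁ᴴ * Sig⁻¹ * X₁
  have hW : W = Q - 1 := by
    simp only [Q, X₁, W, conjTranspose_eq_transpose_of_trivial, transpose_mul,
      PosSemidef.transpose_sqrt, Matrix.mul_assoc]
  have hV : V = X₀ᴴ * Sig⁻¹ * X₁ := by
    simp only [V, X₀, X₁, conjTranspose_eq_transpose_of_trivial, transpose_mul,
      PosSemidef.transpose_sqrt, Matrix.mul_assoc]
  have hdet : IsUnit Sig.det := (isUnit_iff_isUnit_det _).mp hSig_pos.isUnit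
  have hQ : Q * Q + Vᴴ * V = Q := by
    rw [hV]; exact mul_self_add_conjTranspose_mul_self_eq X₀ X₁ hSig hdet
  have hWV : W * W + Vᵀ * V = -W := by
    rw [← conjTranspose_eq_transpose_of_trivial, hW]
    calc (Q - 1) * (Q - 1) + Vᴴ * V = Q * Q + Vᴴ * V - 2 * Q + 1 := by noncomm_ring
      _ = -(Q - 1) := by rw [hQ]; noncomm_ring
  have hQ_psd : Q.PosSemidef := hSig_pos.inv.posSemidef.conjTranspose_mul_mul_same X₁
  refine ⟨hWV, ?_, ?_⟩
  · have hW_herm : Wᴴ = W := by rw [hW]; exact (hQ_psd.isHermitian.sub isHermitian_one).eq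
    rw [← conjTranspose_eq_transpose_of_trivial]
    nth_rewrite 1 [← hW_herm]
    exact (posSemidef_conjTranspose_mul_self W).add (posSemidef_conjTranspose_mul_self V)
  · rwa [hWV, hW, sub_neg_eq_add, add_sub_cancel]
end

section
/- Let Σ be symmetric positive definite M×M and 0 < 2γ μ_i(Σ) < 1 for all i. Define M'_T := Σ(I − 2γΣ)^{2T_eff}. Then for any PSD matrix Σ_w, tr(M'_T Σ^{−1} Σ_w Σ^{−1}) ≥ ∑_{i: μ_i(Σ) < 1/(γ T_eff)} μ_i(Σ_w) / (μ_i(Σ) (1 − 2γμ_i(Σ))^{−2T_eff}), and for indices with μ_i(Σ) < 1/(γT_eff) the factor (1 − 2γμ_i(Σ))^{−2T_eff} is bounded above by e^{8} (assuming 2γμ_i(Σ) ≤ 1/2). -/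
open Matrix Finset

/-!
Diagonalising `Σ = U diag(μ) Uᵀ`, the matrix `Σ⁻¹ M'_T Σ⁻¹` is `U diag(d) Uᵀ` with
`d i = (1 - 2γμ i)^(2T) / μ i`, so the trace equals `d ⬝ᵥ (S *ᵥ ν)` where `S = W ⊙ W` is the
entrywise square of the orthogonal matrix `W = Uᵀ V`, hence doubly stochastic. Since `d` increases
while `ν` decreases, Birkhoff's theorem and the rearrangement inequality give
`d ⬝ᵥ (S *ᵥ ν) ≥ d ⬝ᵥ ν`, and dropping indices only decreases this sum. The exponential bound
comes from `(1 - x)(1 + 2x) ≥ 1` for `x ≤ 1/2`.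
-/

namespace Matrix

variable {n R : Type*} [Fintype n] [DecidableEq n]

section CommRing

variable [CommRing R] {U : Matrix n n R}

lemma conj_mul_conj (hU : U * Uᵀ = 1) (A B : Matrix n n R) :
    U * A * Uᵀ * (U * B * Uᵀ) = U * (A * B) * Uᵀ := by
  have hUU : Uᵀ * U = 1 := mul_eq_one_comm.mp hU
  simp only [Matrix.mul_assoc, ← Matrix.mul_assoc Uᵀ U, hUU, Matrix.one_mul]

lemma conj_pow (hU : U * Uᵀ = 1) (A : Matrix n n R) (k : ℕ) :
    (U * A * Uᵀ) ^ k = U * A ^ k * Uᵀ := by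
  induction k with
  | zero => simpa using hU.symm
  | succ k ih => rw [pow_succ, ih, conj_mul_conj hU, pow_succ]

lemma one_sub_smul_conj_diagonal (hU : U * Uᵀ = 1) (c : R) (μ : n → R) :
    1 - c • (U * diagonal μ * Uᵀ) = U * diagonal (fun i => 1 - c * μ i) * Uᵀ := by
  have hdiag : diagonal (fun i => 1 - c * μ i) = 1 - c • diagonal μ := by
    ext i j
    by_cases hij : i = j <;> simp [hij]
  rw [hdiag, Matrix.mul_sub, Matrix.sub_mul, Matrix.mul_one, hU, Matrix.mul_smul,
    Matrix.smul_mul]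

lemma trace_diagonal_mul_mul_diagonal_mul_transpose (W : Matrix n n R) (d ν : n → R) :
    trace (diagonal d * W * diagonal ν * Wᵀ) = d ⬝ᵥ ((W ⊙ W) *ᵥ ν) := by
  simp only [trace, dotProduct, mulVec, mul_sum]
  refine sum_congr rfl fun i _ => sum_congr rfl fun j _ => ?_
  simp only [mul_diagonal, diagonal_mul, transpose_apply, hadamard_apply]
  ring

lemma trace_conj_diagonal_mul_conj_diagonal (U V : Matrix n n R) (d ν : n → R) :
    trace (U * diagonal d * Uᵀ * (V * diagonal ν * Vᵀ)) =
      d ⬝ᵥ (((Uᵀ * V) ⊙ (Uᵀ * V)) *ᵥ ν) := by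
  calc trace (U * diagonal d * Uᵀ * (V * diagonal ν * Vᵀ))
      = trace (U * (diagonal d * Uᵀ * (V * diagonal ν * Vᵀ))) := by simp only [Matrix.mul_assoc]
    _ = trace (diagonal d * Uᵀ * (V * diagonal ν * Vᵀ) * U) := trace_mul_comm _ _
    _ = trace (diagonal d * (Uᵀ * V) * diagonal ν * (Uᵀ * V)ᵀ) := by
      rw [transpose_mul, transpose_transpose]; simp only [Matrix.mul_assoc]
    _ = _ := trace_diagonal_mul_mul_diagonal_mul_transpose _ _ _

end CommRing

lemma inv_conj_diagonal [Field R] {U : Matrix n n R} (hU : U * Uᵀ = 1) {μ : n → R}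
    (hμ : ∀ i, μ i ≠ 0) : (U * diagonal μ * Uᵀ)⁻¹ = U * diagonal μ⁻¹ * Uᵀ := by
  apply inv_eq_right_inv
  rw [conj_mul_conj hU, diagonal_mul_diagonal]
  simp only [Pi.inv_apply, mul_inv_cancel₀ (hμ _), diagonal_one, Matrix.mul_one, hU]

lemma hadamard_self_mem_doublyStochastic [CommRing R] [LinearOrder R] [IsStrictOrderedRing R]
    {W : Matrix n n R} (hW : W * Wᵀ = 1) : W ⊙ W ∈ doublyStochastic R n := by
  have hWW : Wᵀ * W = 1 := mul_eq_one_comm.mp hW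
  refine mem_doublyStochastic_iff_sum.mpr ⟨fun i j => mul_self_nonneg _, fun i => ?_, fun j => ?_⟩
  · simpa [mul_apply] using congrFun (congrFun hW i) i
  · simpa [mul_apply] using congrFun (congrFun hWW j) j

lemma _root_.Antivary.dotProduct_le_dotProduct_mulVec [Field R] [LinearOrder R]
    [IsStrictOrderedRing R] {d ν : n → R} (hdν : Antivary d ν) {S : Matrix n n R}
    (hS : S ∈ doublyStochastic R n) : d ⬝ᵥ ν ≤ d ⬝ᵥ (S *ᵥ ν) := by
  obtain ⟨w, hw0, hw1, rfl⟩ := exists_eq_sum_perm_of_mem_doublyStochastic hS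
  calc d ⬝ᵥ ν = ∑ σ, w σ * d ⬝ᵥ ν := by rw [← sum_mul, hw1, one_mul]
    _ ≤ ∑ σ, w σ * d ⬝ᵥ (ν ∘ σ) :=
      sum_le_sum fun σ _ => mul_le_mul_of_nonneg_left hdν.sum_mul_le_sum_mul_comp_perm (hw0 σ)
    _ = d ⬝ᵥ ((∑ σ, w σ • σ.permMatrix R) *ᵥ ν) := by
      simp [sum_mulVec, smul_mulVec, permMatrix_mulVec, dotProduct_sum, dotProduct_smul]

end Matrix

lemma one_sub_mul_pow_div_le {c x y : ℝ} (hc : 0 ≤ c) (hy : 0 < y) (hyx : y ≤ x)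
    (hcx : c * x ≤ 1) (k : ℕ) : (1 - c * x) ^ k / x ≤ (1 - c * y) ^ k / y := by
  have hcy : c * y ≤ c * x := mul_le_mul_of_nonneg_left hyx hc
  exact div_le_div₀ (pow_nonneg (by linarith) _)
    (pow_le_pow_left₀ (by linarith) (by linarith) _) hy hyx

lemma inv_one_sub_pow_le_exp {x : ℝ} (hx0 : 0 ≤ x) (hx : x ≤ 1 / 2) (k : ℕ) :
    ((1 - x) ^ k)⁻¹ ≤ Real.exp (k * (2 * x)) := by
  have hinv : (1 - x)⁻¹ ≤ Real.exp (2 * x) := by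
    rw [inv_le_iff_one_le_mul₀ (by linarith)]
    nlinarith [Real.add_one_le_exp (2 * x)]
  rw [← inv_pow, Real.exp_nat_mul]
  exact pow_le_pow_left₀ (inv_pos.mpr (by linarith)).le hinv k

theorem stmt17_general (M Teff : ℕ) (γ : ℝ) (hγ : 0 < γ)
    (Sig Sigw : Matrix (Fin M) (Fin M) ℝ)
    (U V : Matrix (Fin M) (Fin M) ℝ) (μ ν : Fin M → ℝ)
    (hU : U * Uᵀ = 1) (hV : V * Vᵀ = 1)
    (hSigdiag : Sig = U * Matrix.diagonal μ * Uᵀ)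
    (hSigwdiag : Sigw = V * Matrix.diagonal ν * Vᵀ)
    (hμanti : Antitone μ) (hνanti : Antitone ν)
    (hμpos : ∀ i, 0 < μ i) (hνnonneg : ∀ i, 0 ≤ ν i)
    (heig : ∀ i, 2 * γ * μ i < 1) :
    (Matrix.trace
        ((Sig * (((1 : Matrix (Fin M) (Fin M) ℝ) - (2 * γ) • Sig) ^ (2 * Teff)))
          * Sig⁻¹ * Sigw * Sig⁻¹)
      ≥ ∑ i ∈ Finset.univ.filter (fun i => μ i < 1 / (γ * Teff)),
          ν i / (μ i * ((1 - 2 * γ * μ i) ^ (2 * Teff))⁻¹)) ∧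
    (∀ i, μ i < 1 / (γ * Teff) → 2 * γ * μ i ≤ 1 / 2 →
      ((1 - 2 * γ * μ i) ^ (2 * Teff))⁻¹ ≤ Real.exp 8) := by
  set d : Fin M → ℝ := fun i => (1 - 2 * γ * μ i) ^ (2 * Teff) / μ i with hd
  have hdiagonalised : Sig⁻¹ * (Sig * ((1 - (2 * γ) • Sig) ^ (2 * Teff)) * Sig⁻¹) =
      U * diagonal d * Uᵀ := by
    rw [hSigdiag, inv_conj_diagonal hU fun i => (hμpos i).ne', one_sub_smul_conj_diagonal hU,
      conj_pow hU, diagonal_pow, conj_mul_conj hU, conj_mul_conj hU, conj_mul_conj hU]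
    simp only [diagonal_mul_diagonal, hd, Pi.inv_apply, Pi.pow_apply]
    congr 3 with i
    field_simp [(hμpos i).ne']
  have hW : (Uᵀ * V) * (Uᵀ * V)ᵀ = 1 := by
    rw [transpose_mul, transpose_transpose, Matrix.mul_assoc, ← Matrix.mul_assoc V, hV,
      Matrix.one_mul, mul_eq_one_comm.mp hU]
  have hmono : Monotone d := fun i j hij =>
    one_sub_mul_pow_div_le (by positivity) (hμpos j) (hμanti hij) (heig i).le _
  refine ⟨?_, fun i hi hle => ?_⟩
  · calc ∑ i ∈ univ.filter (fun i => μ i < 1 / (γ * Teff)),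
            ν i / (μ i * ((1 - 2 * γ * μ i) ^ (2 * Teff))⁻¹)
        = ∑ i ∈ univ.filter (fun i => μ i < 1 / (γ * Teff)), d i * ν i :=
          sum_congr rfl fun i _ => by simp only [hd]; field_simp
      _ ≤ d ⬝ᵥ ν := sum_le_sum_of_subset_of_nonneg (filter_subset _ _) fun i _ _ =>
          mul_nonneg (div_nonneg (pow_nonneg (by linarith [heig i]) _) (hμpos i).le) (hνnonneg i)
      _ ≤ d ⬝ᵥ (((Uᵀ * V) ⊙ (Uᵀ * V)) *ᵥ ν) :=
          (hmono.antivary hνanti).dotProduct_le_dotProduct_mulVec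
            (hadamard_self_mem_doublyStochastic hW)
      _ = _ := by
          rw [trace_mul_cycle, hdiagonalised, hSigwdiag, trace_conj_diagonal_mul_conj_diagonal]
  · have hγT : 0 < γ * Teff := one_div_pos.mp ((hμpos i).trans hi)
    have hμγT : μ i * (γ * Teff) < 1 := (lt_div_iff₀ hγT).mp hi
    calc ((1 - 2 * γ * μ i) ^ (2 * Teff))⁻¹
        ≤ Real.exp ((2 * Teff : ℕ) * (2 * (2 * γ * μ i))) :=
          inv_one_sub_pow_le_exp (by linarith [mul_pos (mul_pos two_pos hγ) (hμpos i)]) hle _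
      _ ≤ Real.exp 8 := Real.exp_le_exp.mpr (by push_cast; nlinarith)

/-- Lower trace bound for the bias filter via von Neumann's inequality: with sorted
eigen-decompositions `Σ = U diag(μ) U^⊤`, `Σ_w = V diag(ν) V^⊤` (μ, ν nonincreasing),
and `M'_T = Σ(I − 2γΣ)^{2T_eff}`, one has
`tr(M'_T Σ^{−1} Σ_w Σ^{−1}) ≥ ∑_{i : μ_i < 1/(γT_eff)} ν_i / (μ_i (1−2γμ_i)^{−2T_eff})`,
and `(1−2γμ_i)^{−2T_eff} ≤ e^8` whenever `μ_i < 1/(γT_eff)` and `2γμ_i ≤ 1/2`. -/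
theorem stmt17 (M Teff : ℕ) (hTeff : 1 ≤ Teff) (γ : ℝ) (hγ : 0 < γ)
    (Sig Sigw : Matrix (Fin M) (Fin M) ℝ) (hSig : Sig.PosDef) (hSigw : Sigw.PosSemidef)
    (U V : Matrix (Fin M) (Fin M) ℝ) (μ ν : Fin M → ℝ)
    (hU : U * Uᵀ = 1) (hV : V * Vᵀ = 1)
    (hSigdiag : Sig = U * Matrix.diagonal μ * Uᵀ)
    (hSigwdiag : Sigw = V * Matrix.diagonal ν * Vᵀ)
    (hμanti : Antitone μ) (hνanti : Antitone ν)
    (hμpos : ∀ i, 0 < μ i) (hνnonneg : ∀ i, 0 ≤ ν i)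
    (heig : ∀ i, 2 * γ * μ i < 1) :
    (Matrix.trace
        ((Sig * (((1 : Matrix (Fin M) (Fin M) ℝ) - (2 * γ) • Sig) ^ (2 * Teff)))
          * Sig⁻¹ * Sigw * Sig⁻¹)
      ≥ ∑ i ∈ Finset.univ.filter (fun i => μ i < 1 / (γ * Teff)),
          ν i / (μ i * ((1 - 2 * γ * μ i) ^ (2 * Teff))⁻¹)) ∧
    (∀ i, μ i < 1 / (γ * Teff) → 2 * γ * μ i ≤ 1 / 2 →
      ((1 - 2 * γ * μ i) ^ (2 * Teff))⁻¹ ≤ Real.exp 8) :=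
  stmt17_general M Teff γ hγ Sig Sigw U V μ ν hU hV hSigdiag hSigwdiag hμanti hνanti hμpos hνnonneg
    heig
end
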